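/- Let d ≥ 1, λ > 0, K > 0, L > 0, and let f: ℝ^d → ℝ be twice continuously differentiable with ∫_{[0,1]^d} |∇f(x)|² dx ≥ λ, with |∇f(x)| ≤ K for all x ∈ [0,1]^d, and with ‖D²f(x)‖ ≤ L (operator norm of the Hessian) for all x ∈ [0,1]^d. Let m ∈ ℕ satisfy m ≥ 4√d·L/√λ, and partition [0,1]^d into the m^d congruent closed subcubes of side length 1/m. Then the number of subcubes Q in this partition such that |∇f(x)| ≥ √λ/4 for every x ∈ Q is at least (3λ / (4(1 + K²))) · m^d. -/

import Mathlib

/-!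
Cover the unit cube by the `m ^ d` grid cubes of side `1 / m`, each of volume `m⁻ᵈ`. If a grid
cube contains a point where `‖∇f‖ < √λ / 4`, then, since `∇f` is `L`-Lipschitz on the convex cube
and `L · √d / m ≤ √λ / 4`, we have `‖∇f‖ ≤ √λ / 2` on the whole cube, so it carries at most
`λ / (4 m^d)` of the energy; any other cube carries at most `K² / m^d`. As the total energy is at
least `λ`, the good cubes carry at least `3λ / 4`, so there are at least `3λ m^d / (4 K²)` of them.
-/

open MeasureTheory Real
open scoped Classical

open Set

section Box

variable {ι : Type*}

def euclideanBox (a b : ι → ℝ) : Set (EuclideanSpace ℝ ι) :=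
  {x | ∀ i, x i ∈ Icc (a i) (b i)}

theorem euclideanBox_eq_preimage (a b : ι → ℝ) :
    euclideanBox a b = WithLp.ofLp ⁻¹' Icc a b := by
  ext x
  simp [euclideanBox, Pi.le_def, forall_and]

theorem isCompact_euclideanBox [Finite ι] (a b : ι → ℝ) : IsCompact (euclideanBox a b) := by
  rw [euclideanBox_eq_preimage]
  exact (PiLp.continuousLinearEquiv 2 ℝ (fun _ : ι => ℝ)).toHomeomorph.isCompact_preimage.2
    isCompact_Icc

theorem convex_euclideanBox (a b : ι → ℝ) : Convex ℝ (euclideanBox a b) := by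
  rw [euclideanBox_eq_preimage]
  exact (convex_Icc a b).linear_preimage
    (PiLp.continuousLinearEquiv 2 ℝ (fun _ : ι => ℝ)).toLinearMap

theorem volume_euclideanBox [Fintype ι] (a b : ι → ℝ) :
    volume (euclideanBox a b) = ∏ i, ENNReal.ofReal (b i - a i) := by
  rw [euclideanBox_eq_preimage, (PiLp.volume_preserving_ofLp ι).measure_preimage
    measurableSet_Icc.nullMeasurableSet, Real.volume_Icc_pi]

theorem EuclideanSpace.norm_le_sqrt_card_mul [Fintype ι] {x : EuclideanSpace ℝ ι} {r : ℝ}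
    (hr : 0 ≤ r) (hx : ∀ i, |x i| ≤ r) : ‖x‖ ≤ √(Fintype.card ι) * r := by
  rw [EuclideanSpace.norm_eq, ← Real.sqrt_sq hr, ← Real.sqrt_mul (Nat.cast_nonneg _)]
  gcongr
  calc ∑ i, ‖x i‖ ^ 2 ≤ ∑ _i : ι, r ^ 2 := by
        gcongr with i
        simpa using hx i
    _ = Fintype.card ι * r ^ 2 := by simp

end Box

section Gradient

variable {E : Type*} [NormedAddCommGroup E] [InnerProductSpace ℝ E] [CompleteSpace E] {f : E → ℝ}

theorem norm_gradient_sub_le_of_norm_iteratedFDeriv_two_le (hf : ContDiff ℝ 2 f) {s : Set E}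
    (hs : Convex ℝ s) {L : ℝ} (hL : ∀ x ∈ s, ‖iteratedFDeriv ℝ 2 f x‖ ≤ L) {x y : E}
    (hx : x ∈ s) (hy : y ∈ s) : ‖gradient f y - gradient f x‖ ≤ L * ‖y - x‖ := by
  have hsub : gradient f y - gradient f x =
      (InnerProductSpace.toDual ℝ E).symm (fderiv ℝ f y - fderiv ℝ f x) :=
    (map_sub (InnerProductSpace.toDual ℝ E).symm _ _).symm
  rw [hsub, LinearIsometryEquiv.norm_map]
  refine hs.norm_image_sub_le_of_norm_fderiv_le (𝕜 := ℝ) (fun z _ => ?_) (fun z hz => ?_) hx hy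
  · exact (hf.fderiv_right (by norm_num)).differentiable one_ne_zero z
  · rw [← norm_iteratedFDeriv_one, norm_iteratedFDeriv_fderiv]
    exact hL z hz

theorem continuous_gradient (hf : ContDiff ℝ 1 f) : Continuous (gradient f) :=
  (InnerProductSpace.toDual ℝ E).symm.continuous.comp (hf.continuous_fderiv one_ne_zero)

end Gradient

section Integral

variable {α : Type*} [MeasurableSpace α] {μ : Measure α}

theorem setIntegral_le_sum_setIntegral_of_subset_iUnion {ι : Type*} [Fintype ι] {s : Set α}
    {t : ι → Set α} {g : α → ℝ} (hg : 0 ≤ g) (hst : s ⊆ ⋃ i, t i)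
    (hint : ∀ i, IntegrableOn g (t i) μ) : ∫ x in s, g x ∂μ ≤ ∑ i, ∫ x in t i, g x ∂μ := by
  have hle : μ.restrict s ≤ ∑ i, μ.restrict (t i) :=
    calc μ.restrict s ≤ μ.restrict (⋃ i, t i) := Measure.restrict_mono hst le_rfl
      _ ≤ Measure.sum fun i => μ.restrict (t i) := Measure.restrict_iUnion_le
      _ = ∑ i, μ.restrict (t i) := Measure.sum_fintype _
  calc ∫ x in s, g x ∂μ ≤ ∫ x, g x ∂(∑ i, μ.restrict (t i)) :=
        integral_mono_measure hle (Filter.Eventually.of_forall hg)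
          (integrable_finsetSum_measure.2 fun i _ => hint i)
    _ = ∑ i, ∫ x in t i, g x ∂μ := integral_finsetSum_measure fun i _ => hint i

theorem setIntegral_norm_sq_le {F : Type*} [NormedAddCommGroup F] {s : Set α} {u : α → F}
    {c : ℝ} (hs : μ s < ⊤) (hu : ∀ x ∈ s, ‖u x‖ ≤ c) :
    ∫ x in s, ‖u x‖ ^ 2 ∂μ ≤ c ^ 2 * μ.real s := by
  refine (Real.le_norm_self _).trans (norm_setIntegral_le_of_norm_le_const hs fun x hx => ?_)
  rw [norm_pow, norm_norm]
  exact pow_le_pow_left₀ (norm_nonneg _) (hu x hx) 2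

end Integral

section Grid

variable {ι : Type*} {m : ℕ}

abbrev unitCube (ι : Type*) : Set (EuclideanSpace ℝ ι) := euclideanBox 0 1

def gridCube (m : ℕ) (v : ι → Fin m) : Set (EuclideanSpace ℝ ι) :=
  euclideanBox (fun i => (v i : ℝ) / m) (fun i => ((v i : ℝ) + 1) / m)

theorem exists_fin_mem_Icc_div (hm : 0 < m) {t : ℝ} (ht : t ∈ Icc (0 : ℝ) 1) :
    ∃ k : Fin m, t ∈ Icc ((k : ℝ) / m) (((k : ℝ) + 1) / m) := by
  have hmR : (0 : ℝ) < m := by exact_mod_cast hm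
  obtain ⟨k, hk, hkt, htk⟩ : ∃ k < m, (k : ℝ) ≤ m * t ∧ m * t ≤ k + 1 := by
    refine ⟨min ⌊(m : ℝ) * t⌋₊ (m - 1), by omega, ?_, ?_⟩
    · exact (Nat.cast_le.2 (min_le_left _ _)).trans (Nat.floor_le (by nlinarith [ht.1]))
    · rcases min_cases ⌊(m : ℝ) * t⌋₊ (m - 1) with ⟨h, -⟩ | ⟨h, -⟩ <;> rw [h]
      · exact (Nat.lt_floor_add_one _).le
      · rw [Nat.cast_pred hm, sub_add_cancel]
        nlinarith [ht.2]
  exact ⟨⟨k, hk⟩, (div_le_iff₀' hmR).2 hkt, (le_div_iff₀' hmR).2 htk⟩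

theorem isCompact_gridCube [Finite ι] (v : ι → Fin m) : IsCompact (gridCube m v) :=
  isCompact_euclideanBox _ _

theorem gridCube_subset_unitCube (v : ι → Fin m) : gridCube m v ⊆ unitCube ι := by
  intro x hx i
  refine ⟨(by positivity : (0 : ℝ) ≤ (v i : ℝ) / m).trans (hx i).1, (hx i).2.trans ?_⟩
  exact div_le_one_of_le₀ (by exact_mod_cast (v i).isLt) (Nat.cast_nonneg m)

theorem unitCube_subset_iUnion_gridCube (hm : 0 < m) : unitCube ι ⊆ ⋃ v, gridCube m v := by
  intro x hx
  choose v hv using fun i => exists_fin_mem_Icc_div hm (hx i)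
  exact mem_iUnion.2 ⟨v, hv⟩

theorem measureReal_gridCube [Fintype ι] (v : ι → Fin m) :
    volume.real (gridCube m v) = ((m : ℝ) ^ Fintype.card ι)⁻¹ := by
  simp [measureReal_def, gridCube, volume_euclideanBox, add_div]

theorem norm_sub_le_of_mem_gridCube [Fintype ι] {v : ι → Fin m} {x y : EuclideanSpace ℝ ι}
    (hx : x ∈ gridCube m v) (hy : y ∈ gridCube m v) : ‖x - y‖ ≤ √(Fintype.card ι) / m := by
  rw [div_eq_mul_one_div]
  refine EuclideanSpace.norm_le_sqrt_card_mul (by positivity) fun i => ?_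
  obtain ⟨hx₁, hx₂⟩ := hx i
  obtain ⟨hy₁, hy₂⟩ := hy i
  rw [PiLp.sub_apply, abs_le]
  constructor <;> linarith [add_div (v i : ℝ) 1 m]

theorem setIntegral_norm_sq_gridCube_le [Fintype ι] {F : Type*} [NormedAddCommGroup F]
    {v : ι → Fin m} {u : EuclideanSpace ℝ ι → F} {c : ℝ} (hu : ∀ x ∈ gridCube m v, ‖u x‖ ≤ c) :
    ∫ x in gridCube m v, ‖u x‖ ^ 2 ≤ c ^ 2 / (m : ℝ) ^ Fintype.card ι := by
  simpa [measureReal_gridCube, div_eq_mul_inv] using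
    setIntegral_norm_sq_le ((isCompact_gridCube v).measure_lt_top (μ := volume)) hu

theorem setIntegral_norm_gradient_sq_gridCube_le [Fintype ι] {f : EuclideanSpace ℝ ι → ℝ}
    (hf : ContDiff ℝ 2 f) {v : ι → Fin m} {L r : ℝ}
    (hL : ∀ x ∈ gridCube m v, ‖iteratedFDeriv ℝ 2 f x‖ ≤ L)
    (hmesh : L * (√(Fintype.card ι) / m) ≤ r) {x₀ : EuclideanSpace ℝ ι}
    (hx₀ : x₀ ∈ gridCube m v) (hr : ‖gradient f x₀‖ ≤ r) :
    ∫ x in gridCube m v, ‖gradient f x‖ ^ 2 ≤ (2 * r) ^ 2 / (m : ℝ) ^ Fintype.card ι := by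
  have hL₀ : 0 ≤ L := (norm_nonneg _).trans (hL x₀ hx₀)
  refine setIntegral_norm_sq_gridCube_le fun y hy => ?_
  calc ‖gradient f y‖ ≤ ‖gradient f x₀‖ + ‖gradient f y - gradient f x₀‖ := norm_le_insert' _ _
    _ ≤ r + L * (√(Fintype.card ι) / m) := by
      gcongr
      calc ‖gradient f y - gradient f x₀‖ ≤ L * ‖y - x₀‖ :=
            norm_gradient_sub_le_of_norm_iteratedFDeriv_two_le hf (convex_euclideanBox _ _) hL
              hx₀ hy
        _ ≤ L * (√(Fintype.card ι) / m) := by gcongr; exact norm_sub_le_of_mem_gridCube hy hx₀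
    _ ≤ 2 * r := by linarith

end Grid

theorem sub_mul_le_card_filter_mul {V : Type*} [Fintype V] (P : V → Prop) [DecidablePred P]
    {a : V → ℝ} {c A B M : ℝ} (hM : 0 < M) (hcard : (Fintype.card V : ℝ) ≤ M) (hB : 0 ≤ B)
    (hc : c ≤ ∑ v, a v) (hgood : ∀ v, P v → a v ≤ A / M) (hbad : ∀ v, ¬P v → a v ≤ B / M) :
    (c - B) * M ≤ (Finset.univ.filter P).card * A := by
  rw [← Finset.sum_filter_add_sum_filter_not _ P] at hc
  have hgood_sum := Finset.sum_le_card_nsmul (Finset.univ.filter P) a (A / M) fun v hv =>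
    hgood v (Finset.mem_filter.1 hv).2
  have hbad_sum := Finset.sum_le_card_nsmul (Finset.univ.filter (¬P ·)) a (B / M) fun v hv =>
    hbad v (Finset.mem_filter.1 hv).2
  have hbad_card : ((Finset.univ.filter fun v => ¬P v).card : ℝ) ≤ M :=
    (Nat.cast_le.2 (Finset.card_le_univ _)).trans hcard
  rw [nsmul_eq_mul, mul_div_assoc'] at hgood_sum hbad_sum
  have hbad_total : ((Finset.univ.filter fun v => ¬P v).card : ℝ) * B / M ≤ B :=
    div_le_of_le_mul₀ hM.le hB (by nlinarith)
  rw [← le_div_iff₀ hM]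
  linarith

theorem stmt4_general (d : ℕ) (hd : 1 ≤ d) (lam K L : ℝ) (hlam : 0 < lam) (hL : 0 < L)
    (f : EuclideanSpace ℝ (Fin d) → ℝ) (hf : ContDiff ℝ 2 f)
    (cube : Set (EuclideanSpace ℝ (Fin d)))
    (hcube : cube = {x : EuclideanSpace ℝ (Fin d) | ∀ i, x i ∈ Set.Icc (0 : ℝ) 1})
    (hint : lam ≤ ∫ x in cube, ‖gradient f x‖ ^ 2)
    (hgrad : ∀ x ∈ cube, ‖gradient f x‖ ≤ K)
    (hhess : ∀ x ∈ cube, ‖iteratedFDeriv ℝ 2 f x‖ ≤ L)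
    (m : ℕ) (hm : 4 * Real.sqrt d * L / Real.sqrt lam ≤ (m : ℝ)) :
    3 * lam / (4 * (1 + K ^ 2)) * (m : ℝ) ^ d ≤
      (((Finset.univ : Finset (Fin d → Fin m)).filter
        (fun v => ∀ x : EuclideanSpace ℝ (Fin d),
          (∀ i, x i ∈ Set.Icc (((v i : ℕ) : ℝ) / m) ((((v i : ℕ) : ℝ) + 1) / m)) →
          Real.sqrt lam / 4 ≤ ‖gradient f x‖)).card : ℝ) := by
  change cube = unitCube (Fin d) at hcube
  subst hcube
  set N := (Finset.univ.filter fun v : Fin d → Fin m =>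
    ∀ x ∈ gridCube m v, √lam / 4 ≤ ‖gradient f x‖).card
  change _ ≤ (N : ℝ)
  have hm₀ : 0 < m := by
    have : 0 < 4 * √d * L / √lam := by positivity
    exact_mod_cast this.trans_le hm
  have hmesh : L * (√(Fintype.card (Fin d)) / m) ≤ √lam / 4 := by
    rw [div_le_iff₀ (by positivity)] at hm
    rw [Fintype.card_fin, mul_div_assoc', div_le_div_iff₀ (by positivity) four_pos]
    linarith
  have hsum : lam ≤ ∑ v : Fin d → Fin m, ∫ x in gridCube m v, ‖gradient f x‖ ^ 2 :=
    hint.trans <| setIntegral_le_sum_setIntegral_of_subset_iUnion (fun x => by positivity)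
      (unitCube_subset_iUnion_gridCube hm₀) fun v =>
        ((continuous_gradient (hf.of_le one_le_two)).norm.pow 2).continuousOn.integrableOn_compact
          (isCompact_gridCube v)
  have hgood (v : Fin d → Fin m) (_ : ∀ x ∈ gridCube m v, √lam / 4 ≤ ‖gradient f x‖) :
      ∫ x in gridCube m v, ‖gradient f x‖ ^ 2 ≤ K ^ 2 / (m : ℝ) ^ d := by
    simpa using setIntegral_norm_sq_gridCube_le fun x hx =>
      hgrad x (gridCube_subset_unitCube v hx)
  have hbad (v : Fin d → Fin m) (hv : ¬∀ x ∈ gridCube m v, √lam / 4 ≤ ‖gradient f x‖) :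
      ∫ x in gridCube m v, ‖gradient f x‖ ^ 2 ≤ lam / 4 / (m : ℝ) ^ d := by
    obtain ⟨x₀, hx₀, hx₀_lt⟩ := not_forall₂.1 hv
    convert setIntegral_norm_gradient_sq_gridCube_le hf
      (fun x hx => hhess x (gridCube_subset_unitCube v hx)) hmesh hx₀ (not_le.1 hx₀_lt).le using 2
    · rw [mul_pow, div_pow, sq_sqrt hlam.le]
      ring
    · rw [Fintype.card_fin]
  have key := sub_mul_le_card_filter_mul _ (by positivity) (by simp) (by positivity) hsum hgood hbad
  rw [div_mul_eq_mul_div, div_le_iff₀ (by positivity)]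
  nlinarith [sq_nonneg K, Nat.cast_nonneg (α := ℝ) N]

/-- If `f` is `C²` on a neighborhood of `[0,1]^d` with Dirichlet energy at least
`λ`, gradient bounded by `K` and Hessian operator norm bounded by `L` on `[0,1]^d`, and
`m ≥ 4√d·L/√λ`, then the number of closed subcubes of side `1/m` on which `|∇f| ≥ √λ/4` everywhere
is at least `(3λ/(4(1+K²))) m^d`. -/
theorem stmt4 (d : ℕ) (hd : 1 ≤ d) (lam K L : ℝ) (hlam : 0 < lam) (hK : 0 < K) (hL : 0 < L)
    (f : EuclideanSpace ℝ (Fin d) → ℝ) (hf : ContDiff ℝ 2 f)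
    (cube : Set (EuclideanSpace ℝ (Fin d)))
    (hcube : cube = {x : EuclideanSpace ℝ (Fin d) | ∀ i, x i ∈ Set.Icc (0 : ℝ) 1})
    (hint : lam ≤ ∫ x in cube, ‖gradient f x‖ ^ 2)
    (hgrad : ∀ x ∈ cube, ‖gradient f x‖ ≤ K)
    (hhess : ∀ x ∈ cube, ‖iteratedFDeriv ℝ 2 f x‖ ≤ L)
    (m : ℕ) (hm : 4 * Real.sqrt d * L / Real.sqrt lam ≤ (m : ℝ)) :
    3 * lam / (4 * (1 + K ^ 2)) * (m : ℝ) ^ d ≤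
      (((Finset.univ : Finset (Fin d → Fin m)).filter
        (fun v => ∀ x : EuclideanSpace ℝ (Fin d),
          (∀ i, x i ∈ Set.Icc (((v i : ℕ) : ℝ) / m) ((((v i : ℕ) : ℝ) + 1) / m)) →
          Real.sqrt lam / 4 ≤ ‖gradient f x‖)).card : ℝ) :=
  stmt4_general d hd lam K L hlam hL f hf cube hcube hint hgrad hhess m hm
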